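/- Fix positive integers m₁, m₂, s₁, s₂. Let L, I₀, K₀, N be finitely supported functions ℤ×ℤ → ℝ with K₀ in the simplex S and supported in the m₁×m₂ grid, and set B = I₀⊗K₀ + N. Assume ‖L⊗N‖_F ≤ ε for some ε ≥ 0, and suppose τ > 0 satisfies ‖(L⊗I₀)⊗X‖_F ≥ τ·‖X‖_F for every X supported in the (m₁+s₁−1)×(m₂+s₂−1) grid. Then for every function κ supported in the s₁×s₂ grid, one has ‖K₀⊗κ‖_F ≤ (‖(L⊗B)⊗κ‖_F + ε·‖κ‖_1) / τ. -/

import Mathlib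

/-!
Convolution is multiplication in the group algebra `ℝ[ℤ × ℤ]`, so `B = I₀ ⊗ K₀ + N` gives
`(L ⊗ I₀) ⊗ (K₀ ⊗ κ) = (L ⊗ B) ⊗ κ - (L ⊗ N) ⊗ κ`. As `K₀ ⊗ κ` is supported in the
`(m₁ + s₁ - 1) × (m₂ + s₂ - 1)` grid, the sharpness assumption bounds `τ ‖K₀ ⊗ κ‖_F` by the norm
of the left-hand side; the triangle inequality and Young's inequality `‖A ⊗ κ‖_F ≤ ‖A‖_F ‖κ‖₁`
bound the right-hand side by `‖(L ⊗ B) ⊗ κ‖_F + ε ‖κ‖₁`.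
-/

/-- Images, kernels, and filters: finitely supported functions `ℤ × ℤ → ℝ`. -/
abbrev Img := (ℤ × ℤ) →₀ ℝ

/-- Discrete 2D convolution: `(X ⊗ Y)(i,j) = ∑_{(u,v)} X((i,j)-(u,v)) * Y(u,v)`. -/
noncomputable def conv (X Y : Img) : Img :=
  X.sum fun a xa => Y.sum fun b yb => Finsupp.single (a + b) (xa * yb)

/-- Frobenius norm `‖X‖_F = √(∑ X(i,j)²)`. -/
noncomputable def frob (X : Img) : ℝ := Real.sqrt (X.sum fun _ c => c ^ 2)

/-- Inner product `⟨X, Y⟩ = ∑ X(i,j) * Y(i,j)`. -/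
noncomputable def inner2 (X Y : Img) : ℝ := X.sum fun p c => c * Y p

/-- ℓ¹ norm `‖X‖₁ = ∑ |X(i,j)|`. -/
noncomputable def l1 (X : Img) : ℝ := X.sum fun _ c => |c|

/-- The simplex `S` of blur kernels: nonnegative entries summing to one. -/
def InSimplex (K : Img) : Prop := (∀ p, 0 ≤ K p) ∧ (K.sum fun _ c => c) = 1

/-- `X` is supported in the `a × b` grid `{0,…,a-1} × {0,…,b-1}`. -/
def SuppIn (a b : ℕ) (X : Img) : Prop :=
  ∀ p : ℤ × ℤ, ¬(0 ≤ p.1 ∧ p.1 < (a : ℤ) ∧ 0 ≤ p.2 ∧ p.2 < (b : ℤ)) → X p = 0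

open AddMonoidAlgebra

lemma frob_eq_sqrt_sum_of_support_subset (X : Img) {s : Finset (ℤ × ℤ)} (h : X.support ⊆ s) :
    frob X = Real.sqrt (∑ p ∈ s, X p ^ 2) := by
  rw [frob, Finsupp.sum, Finset.sum_subset h]
  intro x _ hx
  simp [Finsupp.notMem_support_iff.1 hx]

lemma Finset.sqrt_sum_add_sq_le {α : Type*} (s : Finset α) (f g : α → ℝ) :
    Real.sqrt (∑ p ∈ s, (f p + g p) ^ 2) ≤
      Real.sqrt (∑ p ∈ s, f p ^ 2) + Real.sqrt (∑ p ∈ s, g p ^ 2) := by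
  have h := norm_add_le (E := EuclideanSpace ℝ s)
    (WithLp.toLp 2 fun i => f i) (WithLp.toLp 2 fun i => g i)
  simp only [EuclideanSpace.norm_eq, PiLp.add_apply, Real.norm_eq_abs, sq_abs] at h
  rwa [← Finset.sum_coe_sort s fun p => (f p + g p) ^ 2,
    ← Finset.sum_coe_sort s fun p => f p ^ 2, ← Finset.sum_coe_sort s fun p => g p ^ 2]

lemma frob_add_le (X Y : Img) : frob (X + Y) ≤ frob X + frob Y := by
  rw [frob_eq_sqrt_sum_of_support_subset (X + Y) Finsupp.support_add,
    frob_eq_sqrt_sum_of_support_subset X Finset.subset_union_left,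
    frob_eq_sqrt_sum_of_support_subset Y Finset.subset_union_right]
  exact Finset.sqrt_sum_add_sq_le _ _ _

lemma frob_smul (c : ℝ) (X : Img) : frob (c • X) = |c| * frob X := by
  rw [frob_eq_sqrt_sum_of_support_subset (c • X) Finsupp.support_smul, frob, Finsupp.sum]
  simp only [Finsupp.smul_apply, smul_eq_mul, mul_pow]
  rw [← Finset.mul_sum, Real.sqrt_mul (sq_nonneg c), Real.sqrt_sq_eq_abs]

lemma frob_sub_le (X Y : Img) : frob (X - Y) ≤ frob X + frob Y := by
  have hneg : frob (-Y) = frob Y := by rw [← neg_one_smul ℝ Y, frob_smul, abs_neg, abs_one, one_mul]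
  simpa only [sub_eq_add_neg, hneg] using frob_add_le X (-Y)

lemma frob_mapDomain {f : ℤ × ℤ → ℤ × ℤ} (hf : Function.Injective f) (X : Img) :
    frob (Finsupp.mapDomain f X) = frob X := by
  rw [frob, frob, Finsupp.sum_mapDomain_index_inj hf]

lemma l1_nonneg (X : Img) : 0 ≤ l1 X :=
  Finset.sum_nonneg fun _ _ => abs_nonneg _

lemma l1_single_add {a : ℤ × ℤ} {b : ℝ} {X : Img} (ha : a ∉ X.support) (hb : b ≠ 0) :
    l1 (Finsupp.single a b + X) = |b| + l1 X := by
  have hdisj : Disjoint (Finsupp.single a b).support X.support := by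
    simpa [Finsupp.support_single a hb] using ha
  rw [l1, Finsupp.sum_add_index_of_disjoint hdisj, Finsupp.sum_single_index abs_zero, l1]

lemma ofCoeff_conv (X Y : Img) : ofCoeff (conv X Y) = ofCoeff X * ofCoeff Y := by
  rw [AddMonoidAlgebra.mul_def]
  apply AddMonoidAlgebra.coeff_injective
  simp [conv, AddMonoidAlgebra.coeff_finsuppSum, AddMonoidAlgebra.coeff_single]

lemma conv_zero (X : Img) : conv X 0 = 0 :=
  ofCoeff_injective <| by rw [ofCoeff_conv, ofCoeff_zero, mul_zero]

lemma conv_add (X Y Z : Img) : conv X (Y + Z) = conv X Y + conv X Z :=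
  ofCoeff_injective <| by simp only [ofCoeff_conv, ofCoeff_add, mul_add]

lemma conv_single (X : Img) (b : ℤ × ℤ) (c : ℝ) :
    conv X (Finsupp.single b c) = Finsupp.mapDomain (· + b) (c • X) := by
  rw [Finsupp.mapDomain_smul, Finsupp.mapDomain, Finsupp.smul_sum, conv]
  refine Finsupp.sum_congr fun a _ => ?_
  rw [Finsupp.sum_single_index (by simp), Finsupp.smul_single, smul_eq_mul, mul_comm]

lemma frob_conv_single (X : Img) (b : ℤ × ℤ) (c : ℝ) :
    frob (conv X (Finsupp.single b c)) = |c| * frob X := by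
  rw [conv_single, frob_mapDomain (add_left_injective b), frob_smul]

lemma frob_conv_le_frob_mul_l1 (X κ : Img) : frob (conv X κ) ≤ frob X * l1 κ := by
  induction κ using Finsupp.induction with
  | zero => simp [conv_zero, frob, l1]
  | single_add a b κ ha hb ih =>
    calc frob (conv X (Finsupp.single a b + κ))
        ≤ frob (conv X (Finsupp.single a b)) + frob (conv X κ) := by
          rw [conv_add]; exact frob_add_le _ _
      _ ≤ |b| * frob X + frob X * l1 κ := by rw [frob_conv_single]; gcongr
      _ = frob X * l1 (Finsupp.single a b + κ) := by rw [l1_single_add ha hb]; ring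

lemma SuppIn.conv {a b c d : ℕ} {X Y : Img} (hX : SuppIn a b X) (hY : SuppIn c d Y) :
    SuppIn (a + c - 1) (b + d - 1) (conv X Y) := by
  intro p hp
  by_contra hne
  have hmem : p ∈ (ofCoeff X * ofCoeff Y).coeff.support := by
    rw [← ofCoeff_conv]; exact Finsupp.mem_support_iff.2 hne
  obtain ⟨x, hx, y, hy, rfl⟩ :=
    Finset.mem_add.1 (AddMonoidAlgebra.support_coeff_mul_subset _ _ hmem)
  have hx' : 0 ≤ x.1 ∧ x.1 < (a : ℤ) ∧ 0 ≤ x.2 ∧ x.2 < (b : ℤ) :=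
    not_not.1 fun h => Finsupp.mem_support_iff.1 hx (hX x h)
  have hy' : 0 ≤ y.1 ∧ y.1 < (c : ℤ) ∧ 0 ≤ y.2 ∧ y.2 < (d : ℤ) :=
    not_not.1 fun h => Finsupp.mem_support_iff.1 hy (hY y h)
  apply hp
  simp only [Prod.fst_add, Prod.snd_add]
  omega

theorem kernel_constraint_noisy_general (m₁ m₂ s₁ s₂ : ℕ)
    (L I₀ K₀ N B : Img) (hK₀supp : SuppIn m₁ m₂ K₀)
    (hB : B = conv I₀ K₀ + N)
    (ε : ℝ) (hN : frob (conv L N) ≤ ε)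
    (τ : ℝ) (hτ : 0 < τ)
    (hsharp : ∀ X : Img, SuppIn (m₁ + s₁ - 1) (m₂ + s₂ - 1) X →
      τ * frob X ≤ frob (conv (conv L I₀) X)) :
    ∀ κ : Img, SuppIn s₁ s₂ κ →
      frob (conv K₀ κ) ≤ (frob (conv (conv L B) κ) + ε * l1 κ) / τ := by
  intro κ hκ
  have hsplit : conv (conv L I₀) (conv K₀ κ) = conv (conv L B) κ - conv (conv L N) κ :=
    ofCoeff_injective <| by simp only [ofCoeff_sub, ofCoeff_conv, hB, ofCoeff_add]; ring
  have hnoise : frob (conv (conv L N) κ) ≤ ε * l1 κ :=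
    (frob_conv_le_frob_mul_l1 _ _).trans (mul_le_mul_of_nonneg_right hN (l1_nonneg κ))
  rw [le_div_iff₀' hτ]
  calc τ * frob (conv K₀ κ) ≤ frob (conv (conv L I₀) (conv K₀ κ)) := hsharp _ (hK₀supp.conv hκ)
    _ ≤ frob (conv (conv L B) κ) + frob (conv (conv L N) κ) := hsplit ▸ frob_sub_le _ _
    _ ≤ frob (conv (conv L B) κ) + ε * l1 κ := by gcongr

/-- Noisy necessary condition on the true kernel:
`‖K₀ ⊗ κ‖_F ≤ (‖L(B) ⊗ κ‖_F + ε ‖κ‖₁) / τ`. -/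
theorem kernel_constraint_noisy (m₁ m₂ s₁ s₂ : ℕ)
    (hm₁ : 0 < m₁) (hm₂ : 0 < m₂) (hs₁ : 0 < s₁) (hs₂ : 0 < s₂)
    (L I₀ K₀ N B : Img) (hK₀ : InSimplex K₀) (hK₀supp : SuppIn m₁ m₂ K₀)
    (hB : B = conv I₀ K₀ + N)
    (ε : ℝ) (hε : 0 ≤ ε) (hN : frob (conv L N) ≤ ε)
    (τ : ℝ) (hτ : 0 < τ)
    (hsharp : ∀ X : Img, SuppIn (m₁ + s₁ - 1) (m₂ + s₂ - 1) X →
      τ * frob X ≤ frob (conv (conv L I₀) X)) :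
    ∀ κ : Img, SuppIn s₁ s₂ κ →
      frob (conv K₀ κ) ≤ (frob (conv (conv L B) κ) + ε * l1 κ) / τ :=
  kernel_constraint_noisy_general m₁ m₂ s₁ s₂ L I₀ K₀ N B hK₀supp hB ε hN τ hτ hsharp
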